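/- arXiv:2005.13703 — 2 statements merged into one kernel-verified Lean document; each statement's English description precedes it below -/
import Mathlib

section
/- Let T be a finite tree and u, v distinct vertices of T with deg_T(u) ≥ 1 and deg_T(v) ≥ 2. Let u⁺ and v⁻ be the neighbors of u and v on the unique path from u to v in T, and let T̃ be the tree obtained from T by the total neighbor switch S^B_{v→u} with B = N_T(v) \ {v⁻}, i.e. by deleting all edges from v to B and adding edges from u to every vertex of B. Then (a) m(T̃) ≥ m(T), and (b) s(T̃) ≥ s(T) provided additionally deg_T(u⁺) ≥ deg_T(v⁻) in case u and v are not adjacent. -/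
open SimpleGraph Finset

variable {V : Type*}

/-- The `m`-metric (first Zagreb index) of a graph: the sum of the squares of the degrees. -/
noncomputable def mMetric [Fintype V] (G : SimpleGraph V) : ℕ :=
  letI := Classical.decRel G.Adj
  ∑ v : V, (G.degree v) ^ 2

/-- The `s`-metric (second Zagreb index) of a graph: the sum over all edges of the product of
the degrees of the two endpoints. -/
noncomputable def sMetric [Fintype V] (G : SimpleGraph V) : ℕ :=
  letI := Classical.decRel G.Adj
  ∑ e ∈ G.edgeFinset,
    Sym2.lift ⟨fun u v => G.degree u * G.degree v, fun _ _ => Nat.mul_comm _ _⟩ e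

/-- The first SF-dimension: the maximum of the `m`-metric over all spanning trees. -/
noncomputable def tau1 [Fintype V] (G : SimpleGraph V) : ℕ :=
  sSup {k | ∃ T : SimpleGraph V, T ≤ G ∧ T.IsTree ∧ mMetric T = k}

/-- The second SF-dimension: the maximum of the `s`-metric over all spanning trees. -/
noncomputable def tau2 [Fintype V] (G : SimpleGraph V) : ℕ :=
  sSup {k | ∃ T : SimpleGraph V, T ≤ G ∧ T.IsTree ∧ sMetric T = k}

/-- Number of vertices of a given degree. -/
noncomputable def degCount [Fintype V] (G : SimpleGraph V) (k : ℕ) : ℕ :=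
  letI := Classical.decRel G.Adj
  letI := Classical.decEq V
  (Finset.univ.filter fun v => G.degree v = k).card

/-- Number of leaves of a graph. -/
noncomputable def leafCount [Fintype V] (G : SimpleGraph V) : ℕ := degCount G 1

/-- The neighbor switch `S^B_{v→u}`: delete the edges joining `v` to the vertices of `B`
and add the edges joining `u` to the vertices of `B`. -/
def switchGraph (T : SimpleGraph V) (u v : V) (B : Set V) : SimpleGraph V :=
  (T.deleteEdges {e | ∃ b ∈ B, e = s(v, b)}) ⊔
    SimpleGraph.fromEdgeSet {e | ∃ b ∈ B, e = s(u, b)}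

lemma aux_mMetric_def [Fintype V] (G : SimpleGraph V) [DecidableRel G.Adj] :
    mMetric G = ∑ v : V, (G.degree v) ^ 2 := by
  unfold mMetric; congr!

lemma aux_sMetric_def [Fintype V] (G : SimpleGraph V) [DecidableRel G.Adj] :
    sMetric G = ∑ e ∈ G.edgeFinset,
      Sym2.lift ⟨fun u v => G.degree u * G.degree v, fun _ _ => Nat.mul_comm _ _⟩ e := by
  unfold sMetric; congr!

lemma aux_walkfacts (T : SimpleGraph V) (hT : T.IsTree)
    (u v : V) (huv : u ≠ v)
    (P : T.Walk u v) (hP : P.IsPath)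
    (uplus vminus : V) (huplus : uplus = P.getVert 1)
    (hvminus : vminus = P.getVert (P.length - 1)) :
    T.Adj v vminus ∧ T.Adj u uplus ∧
      (T.Adj u v → vminus = u ∧ uplus = v) ∧
      (∀ b, T.Adj v b → b ≠ vminus → ¬ T.Adj u b) := by
  have hlen : 0 < P.length := by
    rcases Nat.eq_zero_or_pos P.length with h | h
    · exact absurd (SimpleGraph.Walk.eq_of_length_eq_zero h) huv
    · exact h
  have hvm : T.Adj v vminus := by
    have := P.adj_getVert_succ (i := P.length - 1) (by omega)
    rw [Nat.sub_add_cancel hlen, P.getVert_length] at this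
    rw [hvminus]; exact this.symm
  have hup : T.Adj u uplus := by
    have := P.adj_getVert_succ (i := 0) hlen
    rw [P.getVert_zero] at this
    rw [huplus]; exact this
  have hadjcase : T.Adj u v → vminus = u ∧ uplus = v := by
    intro h
    have h1 : (SimpleGraph.Walk.cons h .nil).IsPath := by simp [h.ne]
    have := (hT.existsUnique_path u v).unique hP h1
    subst this
    simp [hvminus, huplus, SimpleGraph.Walk.getVert_cons_succ]
  refine ⟨hvm, hup, hadjcase, ?_⟩
  intro b hvb hbvm hub
  by_cases hA : T.Adj u v
  · obtain ⟨h1, h2⟩ := hadjcase hA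
    have p1 : (SimpleGraph.Walk.cons hub .nil).IsPath := by simp [hub.ne]
    have p2 : (SimpleGraph.Walk.cons hA (SimpleGraph.Walk.cons hvb .nil)).IsPath := by
      simp [hA.ne, hvb.ne, hbvm, h1, hub.ne]
    have := (hT.existsUnique_path u b).unique p1 p2
    have : (SimpleGraph.Walk.cons hub (.nil : T.Walk b b)).length =
        (SimpleGraph.Walk.cons hA (SimpleGraph.Walk.cons hvb .nil)).length := by rw [this]
    simp at this
  · have p2 : (SimpleGraph.Walk.cons hub (SimpleGraph.Walk.cons hvb.symm .nil)).IsPath := by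
      rw [SimpleGraph.Walk.isPath_def]
      simp [hub.ne, hvb.ne', huv]
    have heq := (hT.existsUnique_path u v).unique hP p2
    rw [heq] at hvminus
    simp [SimpleGraph.Walk.getVert_cons_succ] at hvminus
    exact hbvm hvminus.symm

lemma aux_switchGraph_adj (T : SimpleGraph V) (u v : V) (B : Set V) (x y : V) :
    (switchGraph T u v B).Adj x y ↔
      (T.Adj x y ∧ ¬((x = v ∧ y ∈ B) ∨ (y = v ∧ x ∈ B))) ∨
        (x ≠ y ∧ ((x = u ∧ y ∈ B) ∨ (y = u ∧ x ∈ B))) := by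
  simp only [switchGraph, SimpleGraph.sup_adj, SimpleGraph.deleteEdges_adj,
    SimpleGraph.fromEdgeSet_adj, Set.mem_setOf_eq]
  constructor
  · rintro (⟨h, hD⟩ | ⟨⟨b, hb, he⟩, hne⟩)
    · refine Or.inl ⟨h, ?_⟩
      rintro (⟨rfl, hy⟩ | ⟨rfl, hx⟩)
      · exact hD ⟨y, hy, rfl⟩
      · exact hD ⟨x, hx, Sym2.eq_swap⟩
    · rw [Sym2.eq_iff] at he
      rcases he with ⟨rfl, rfl⟩ | ⟨rfl, rfl⟩
      · exact Or.inr ⟨hne, Or.inl ⟨rfl, hb⟩⟩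
      · exact Or.inr ⟨hne, Or.inr ⟨rfl, hb⟩⟩
  · rintro (⟨h, hD⟩ | ⟨hne, (⟨rfl, hy⟩ | ⟨rfl, hx⟩)⟩)
    · refine Or.inl ⟨h, ?_⟩
      rintro ⟨b, hb, he⟩
      rw [Sym2.eq_iff] at he
      rcases he with ⟨rfl, rfl⟩ | ⟨rfl, rfl⟩
      · exact hD (Or.inl ⟨rfl, hb⟩)
      · exact hD (Or.inr ⟨rfl, hb⟩)
    · exact Or.inr ⟨⟨y, hy, rfl⟩, hne⟩
    · exact Or.inr ⟨⟨x, hx, Sym2.eq_swap⟩, hne⟩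

lemma aux_mem_image_pair [DecidableEq V] {z x y : V} {S : Finset V} :
    s(x, y) ∈ S.image (fun b => s(z, b)) ↔ (x = z ∧ y ∈ S) ∨ (y = z ∧ x ∈ S) := by
  simp only [Finset.mem_image, Sym2.eq_iff]
  constructor
  · rintro ⟨b, hb, (⟨rfl, rfl⟩ | ⟨rfl, rfl⟩)⟩
    · exact Or.inl ⟨rfl, hb⟩
    · exact Or.inr ⟨rfl, hb⟩
  · rintro (⟨rfl, hy⟩ | ⟨rfl, hx⟩)
    · exact ⟨y, hy, Or.inl ⟨rfl, rfl⟩⟩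
    · exact ⟨x, hx, Or.inr ⟨rfl, rfl⟩⟩

section
variable [Fintype V] [DecidableEq V] (T : SimpleGraph V) [DecidableRel T.Adj]
  (u v vminus : V)
  [DecidableRel (switchGraph T u v (T.neighborSet v \ {vminus})).Adj]
  (huv : u ≠ v) (hvm : T.Adj v vminus)
  (hnadj : ∀ b, T.Adj v b → b ≠ vminus → ¬T.Adj u b)
  (huB : T.Adj v u → u = vminus)

include huv hvm hnadj huB

set_option linter.unusedSectionVars false

lemma aux_switch_nbr_v :
    (switchGraph T u v (T.neighborSet v \ {vminus})).neighborFinset v = {vminus} := by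
  ext y
  rw [SimpleGraph.mem_neighborFinset, aux_switchGraph_adj]
  simp only [Set.mem_diff, SimpleGraph.mem_neighborSet, Set.mem_singleton_iff,
    Finset.mem_singleton]
  constructor
  · rintro (⟨h, hn⟩ | ⟨hne, (⟨h1, _⟩ | ⟨_, h2, _⟩)⟩)
    · by_contra hy
      exact hn (Or.inl ⟨trivial, h, hy⟩)
    · exact absurd h1.symm huv
    · exact absurd h2 T.irrefl
  · rintro rfl
    refine Or.inl ⟨hvm, ?_⟩
    rintro (⟨_, _, h⟩ | ⟨h, _⟩)
    · exact h rfl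
    · exact hvm.ne h.symm

lemma aux_switch_nbr_u :
    (switchGraph T u v (T.neighborSet v \ {vminus})).neighborFinset u =
      T.neighborFinset u ∪ (T.neighborFinset v).erase vminus := by
  ext y
  rw [SimpleGraph.mem_neighborFinset, aux_switchGraph_adj]
  simp only [Set.mem_diff, SimpleGraph.mem_neighborSet, Set.mem_singleton_iff,
    Finset.mem_union, Finset.mem_erase, SimpleGraph.mem_neighborFinset]
  constructor
  · rintro (⟨h, _⟩ | ⟨hne, (⟨_, h, hy⟩ | ⟨rfl, h, hy⟩)⟩)
    · exact Or.inl h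
    · exact Or.inr ⟨hy, h⟩
    · exact absurd (huB h) hy
  · rintro (h | ⟨hy, h⟩)
    · refine Or.inl ⟨h, ?_⟩
      rintro (⟨h1, _⟩ | ⟨rfl, h2, h3⟩)
      · exact huv h1
      · exact h3 (huB h2)
    · refine Or.inr ⟨?_, Or.inl ⟨trivial, h, hy⟩⟩
      rintro rfl
      exact hy (huB h)

lemma aux_switch_nbr_other (w : V) (hwu : w ≠ u) (hwv : w ≠ v) :
    (switchGraph T u v (T.neighborSet v \ {vminus})).neighborFinset w =
      if T.Adj v w ∧ w ≠ vminus then insert u ((T.neighborFinset w).erase v)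
      else T.neighborFinset w := by
  have hwu' : T.Adj v w → w ≠ vminus → ¬T.Adj u w := hnadj w
  ext y
  rw [SimpleGraph.mem_neighborFinset, aux_switchGraph_adj]
  simp only [Set.mem_diff, SimpleGraph.mem_neighborSet, Set.mem_singleton_iff]
  by_cases hw : T.Adj v w ∧ w ≠ vminus
  · simp only [if_pos hw, Finset.mem_insert, Finset.mem_erase,
      SimpleGraph.mem_neighborFinset]
    constructor
    · rintro (⟨h, hn⟩ | ⟨hne, (⟨h1, _⟩ | ⟨rfl, _⟩)⟩)
      · refine Or.inr ⟨?_, h⟩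
        rintro rfl
        exact hn (Or.inr ⟨rfl, hw⟩)
      · exact absurd h1 hwu
      · exact Or.inl rfl
    · rintro (rfl | ⟨hy, h⟩)
      · exact Or.inr ⟨hwu, Or.inr ⟨rfl, hw⟩⟩
      · refine Or.inl ⟨h, ?_⟩
        rintro (⟨h1, _⟩ | ⟨h2, _⟩)
        · exact hwv h1
        · exact hy h2
  · simp only [if_neg hw, SimpleGraph.mem_neighborFinset]
    constructor
    · rintro (⟨h, _⟩ | ⟨hne, (⟨h1, _⟩ | ⟨h2, hB⟩)⟩)
      · exact h
      · exact absurd h1 hwu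
      · exact absurd hB hw
    · intro h
      refine Or.inl ⟨h, ?_⟩
      rintro (⟨h1, _⟩ | ⟨h2, hB⟩)
      · exact hwv h1
      · exact hw hB

lemma aux_switch_degree_v :
    (switchGraph T u v (T.neighborSet v \ {vminus})).degree v = 1 := by
  rw [← SimpleGraph.card_neighborFinset_eq_degree,
    aux_switch_nbr_v T u v vminus huv hvm hnadj huB, Finset.card_singleton]

lemma aux_switch_degree_u :
    (switchGraph T u v (T.neighborSet v \ {vminus})).degree u =
      T.degree u + (T.degree v - 1) := by
  rw [← SimpleGraph.card_neighborFinset_eq_degree,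
    aux_switch_nbr_u T u v vminus huv hvm hnadj huB,
    Finset.card_union_of_disjoint, ← SimpleGraph.card_neighborFinset_eq_degree,
    ← SimpleGraph.card_neighborFinset_eq_degree,
    Finset.card_erase_of_mem ((SimpleGraph.mem_neighborFinset ..).2 hvm)]
  · rw [Finset.disjoint_left]
    intro b hb hb'
    rw [SimpleGraph.mem_neighborFinset] at hb
    rw [Finset.mem_erase, SimpleGraph.mem_neighborFinset] at hb'
    exact hnadj b hb'.2 hb'.1 hb

lemma aux_switch_degree_other (w : V) (hwu : w ≠ u) (hwv : w ≠ v) :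
    (switchGraph T u v (T.neighborSet v \ {vminus})).degree w = T.degree w := by
  rw [← SimpleGraph.card_neighborFinset_eq_degree,
    aux_switch_nbr_other T u v vminus huv hvm hnadj huB w hwu hwv,
    ← SimpleGraph.card_neighborFinset_eq_degree]
  by_cases hw : T.Adj v w ∧ w ≠ vminus
  · rw [if_pos hw, Finset.card_insert_of_notMem, Finset.card_erase_of_mem
      ((SimpleGraph.mem_neighborFinset ..).2 hw.1.symm)]
    · have h1 : 0 < #(T.neighborFinset w) :=
        Finset.card_pos.2 ⟨v, (SimpleGraph.mem_neighborFinset ..).2 hw.1.symm⟩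
      omega
    · simp only [Finset.mem_erase, SimpleGraph.mem_neighborFinset]
      rintro ⟨_, h⟩
      exact hnadj w hw.1 hw.2 h.symm
  · rw [if_neg hw]

end

/-- Lemma 3 (total neighbor switch does not decrease the m-metric, nor the s-metric under
the extra degree condition), in the weaker setting `deg u ≥ 1`. -/
theorem totalSwitch_mMetric_le_and_sMetric_le [Fintype V] [DecidableEq V]
    (T : SimpleGraph V) [DecidableRel T.Adj] (hT : T.IsTree)
    (u v : V) (huv : u ≠ v)
    (hdegu : 1 ≤ T.degree u) (hdegv : 2 ≤ T.degree v)
    (P : T.Walk u v) (hP : P.IsPath)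
    (uplus vminus : V) (huplus : uplus = P.getVert 1)
    (hvminus : vminus = P.getVert (P.length - 1)) :
    mMetric T ≤ mMetric (switchGraph T u v (T.neighborSet v \ {vminus})) ∧
      ((¬T.Adj u v → T.degree vminus ≤ T.degree uplus) →
        sMetric T ≤ sMetric (switchGraph T u v (T.neighborSet v \ {vminus}))) := by
  obtain ⟨hvm, hup, hadjcase, hnadj⟩ :=
    aux_walkfacts T hT u v huv P hP uplus vminus huplus hvminus
  have huB : T.Adj v u → u = vminus := fun h => ((hadjcase h.symm).1).symm
  letI : DecidableRel (switchGraph T u v (T.neighborSet v \ {vminus})).Adj :=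
    Classical.decRel _
  set T' := switchGraph T u v (T.neighborSet v \ {vminus}) with hT'def
  have hdv : T'.degree v = 1 := aux_switch_degree_v T u v vminus huv hvm hnadj huB
  have hdu : T'.degree u = T.degree u + (T.degree v - 1) :=
    aux_switch_degree_u T u v vminus huv hvm hnadj huB
  have hdo : ∀ w, w ≠ u → w ≠ v → T'.degree w = T.degree w := fun w h1 h2 =>
    aux_switch_degree_other T u v vminus huv hvm hnadj huB w h1 h2
  have hdeg_ge : ∀ w, w ≠ v → T.degree w ≤ T'.degree w := by
    intro w hw
    by_cases hwu : w = u
    · subst hwu; rw [hdu]; omega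
    · rw [hdo w hwu hw]
  constructor
  · -- m-metric
    rw [aux_mMetric_def, aux_mMetric_def]
    have hsub : ({u, v} : Finset V) ⊆ Finset.univ := Finset.subset_univ _
    rw [← Finset.sum_sdiff hsub, ← Finset.sum_sdiff hsub]
    refine Nat.add_le_add (le_of_eq (Finset.sum_congr rfl ?_)) ?_
    · intro w hw
      simp only [Finset.mem_sdiff, Finset.mem_insert, Finset.mem_singleton, not_or] at hw
      rw [hdo w hw.2.1 hw.2.2]
    · rw [Finset.sum_pair huv, Finset.sum_pair huv, hdu, hdv]
      obtain ⟨a', ha⟩ : ∃ a', T.degree u = a' + 1 := ⟨T.degree u - 1, by omega⟩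
      obtain ⟨d', hd⟩ : ∃ d', T.degree v = d' + 2 := ⟨T.degree v - 2, by omega⟩
      rw [ha, hd]
      have : d' + 2 - 1 = d' + 1 := by omega
      rw [this]
      nlinarith
  · -- s-metric
    intro hcond
    rw [aux_sMetric_def, aux_sMetric_def]
    set Bfin : Finset V := (T.neighborFinset v).erase vminus with hBfin
    have hBfin_mem : ∀ b, b ∈ Bfin ↔ T.Adj v b ∧ b ≠ vminus := by
      intro b
      rw [hBfin, Finset.mem_erase, SimpleGraph.mem_neighborFinset, and_comm]
    have hBu : ∀ b ∈ Bfin, b ≠ u := by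
      intro b hb
      rw [hBfin_mem] at hb
      rintro rfl
      exact hb.2 (huB hb.1)
    have hBv : ∀ b ∈ Bfin, b ≠ v := by
      intro b hb
      rw [hBfin_mem] at hb
      exact hb.1.ne'
    set D : Finset (Sym2 V) := Bfin.image (fun b => s(v, b)) with hD
    set A : Finset (Sym2 V) := Bfin.image (fun b => s(u, b)) with hA
    have hDmem : ∀ x y, s(x, y) ∈ D ↔ (x = v ∧ y ∈ Bfin) ∨ (y = v ∧ x ∈ Bfin) :=
      fun x y => aux_mem_image_pair
    have hAmem : ∀ x y, s(x, y) ∈ A ↔ (x = u ∧ y ∈ Bfin) ∨ (y = u ∧ x ∈ Bfin) :=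
      fun x y => aux_mem_image_pair
    have hBsB : ∀ y, y ∈ T.neighborSet v \ {vminus} ↔ y ∈ Bfin := by
      intro y
      rw [hBfin_mem]
      simp [SimpleGraph.mem_neighborSet]
    -- the edge finset of T'
    have hEdge : T'.edgeFinset = (T.edgeFinset \ D) ∪ A := by
      ext e
      refine Sym2.ind (fun x y => ?_) e
      rw [Finset.mem_union, Finset.mem_sdiff, SimpleGraph.mem_edgeFinset,
        SimpleGraph.mem_edgeFinset, SimpleGraph.mem_edgeSet, SimpleGraph.mem_edgeSet,
        hT'def, aux_switchGraph_adj, hDmem, hAmem]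
      constructor
      · rintro (⟨h, hn⟩ | ⟨hne, (⟨rfl, hy⟩ | ⟨rfl, hx⟩)⟩)
        · refine Or.inl ⟨h, ?_⟩
          rintro (⟨h1, h2⟩ | ⟨h1, h2⟩)
          · exact hn (Or.inl ⟨h1, (hBsB y).2 h2⟩)
          · exact hn (Or.inr ⟨h1, (hBsB x).2 h2⟩)
        · exact Or.inr (Or.inl ⟨rfl, (hBsB y).1 hy⟩)
        · exact Or.inr (Or.inr ⟨rfl, (hBsB x).1 hx⟩)
      · rintro (⟨h, hn⟩ | (⟨rfl, hy⟩ | ⟨rfl, hx⟩))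
        · refine Or.inl ⟨h, ?_⟩
          rintro (⟨h1, h2⟩ | ⟨h1, h2⟩)
          · exact hn (Or.inl ⟨h1, (hBsB y).1 h2⟩)
          · exact hn (Or.inr ⟨h1, (hBsB x).1 h2⟩)
        · exact Or.inr ⟨fun h => hBu y hy h.symm, Or.inl ⟨rfl, (hBsB y).2 hy⟩⟩
        · exact Or.inr ⟨fun h => hBu x hx h, Or.inr ⟨rfl, (hBsB x).2 hx⟩⟩
    have hDsub : D ⊆ T.edgeFinset := by
      intro e he
      rw [hD, Finset.mem_image] at he
      obtain ⟨b, hb, rfl⟩ := he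
      rw [SimpleGraph.mem_edgeFinset, SimpleGraph.mem_edgeSet]
      exact ((hBfin_mem b).1 hb).1
    have hdisj : Disjoint (T.edgeFinset \ D) A := by
      rw [Finset.disjoint_right]
      intro e he
      rw [hA, Finset.mem_image] at he
      obtain ⟨b, hb, rfl⟩ := he
      rw [Finset.mem_sdiff, SimpleGraph.mem_edgeFinset, SimpleGraph.mem_edgeSet]
      rw [hBfin_mem] at hb
      exact fun h => hnadj b hb.1 hb.2 h.1
    rw [hEdge, Finset.sum_union hdisj, ← Finset.sum_sdiff hDsub]
    -- notation for the two weight functions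
    set f : Sym2 V → ℕ :=
      fun e => Sym2.lift ⟨fun x y => T.degree x * T.degree y, fun _ _ => Nat.mul_comm _ _⟩ e
      with hf
    set f' : Sym2 V → ℕ :=
      fun e => Sym2.lift ⟨fun x y => T'.degree x * T'.degree y, fun _ _ => Nat.mul_comm _ _⟩ e
      with hf'
    have hfmk : ∀ x y, f s(x, y) = T.degree x * T.degree y := fun x y => rfl
    have hf'mk : ∀ x y, f' s(x, y) = T'.degree x * T'.degree y := fun x y => rfl
    -- the special edge
    have he₀ : s(v, vminus) ∈ T.edgeFinset \ D := by
      rw [Finset.mem_sdiff, SimpleGraph.mem_edgeFinset, SimpleGraph.mem_edgeSet, hDmem]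
      refine ⟨hvm, ?_⟩
      rintro (⟨_, h2⟩ | ⟨h1, _⟩)
      · exact ((hBfin_mem vminus).1 h2).2 rfl
      · exact hvm.ne' h1
    -- pointwise inequality away from the special edge
    have hpoint : ∀ e ∈ (T.edgeFinset \ D).erase s(v, vminus), f e ≤ f' e := by
      intro e
      refine Sym2.ind (fun x y he => ?_) e
      rw [Finset.mem_erase, Finset.mem_sdiff, SimpleGraph.mem_edgeFinset,
        SimpleGraph.mem_edgeSet] at he
      obtain ⟨hne, hadj, hnD⟩ := he
      have hxv : x ≠ v := by
        rintro rfl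
        by_cases hy : y = vminus
        · subst hy; exact hne rfl
        · exact hnD ((hDmem x y).2 (Or.inl ⟨rfl, (hBfin_mem y).2 ⟨hadj, hy⟩⟩))
      have hyv : y ≠ v := by
        rintro rfl
        by_cases hx : x = vminus
        · subst hx; exact hne (Sym2.eq_swap)
        · exact hnD ((hDmem x y).2 (Or.inr ⟨rfl, (hBfin_mem x).2 ⟨hadj.symm, hx⟩⟩))
      rw [hfmk, hf'mk]
      exact Nat.mul_le_mul (hdeg_ge x hxv) (hdeg_ge y hyv)
    -- sums over D and A
    have hinj : ∀ (z : V), ∀ x ∈ Bfin, ∀ y ∈ Bfin,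
        (fun b => s(z, b)) x = (fun b => s(z, b)) y → x = y :=
      fun z x _ y _ h => Sym2.congr_right.1 h
    have hDsum : ∑ e ∈ D, f e = T.degree v * ∑ b ∈ Bfin, T.degree b := by
      rw [hD, Finset.sum_image (hinj v), Finset.mul_sum]
      exact Finset.sum_congr rfl fun b _ => hfmk v b
    have hAsum : ∑ e ∈ A, f' e =
        (T.degree u + (T.degree v - 1)) * ∑ b ∈ Bfin, T.degree b := by
      rw [hA, Finset.sum_image (hinj u), Finset.mul_sum]
      refine Finset.sum_congr rfl fun b hb => ?_
      rw [hf'mk u b, hdu, hdo b (hBu b hb) (hBv b hb)]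
    obtain ⟨a', ha⟩ : ∃ a', T.degree u = a' + 1 := ⟨T.degree u - 1, by omega⟩
    obtain ⟨d', hd⟩ : ∃ d', T.degree v = d' + 2 := ⟨T.degree v - 2, by omega⟩
    have hd1 : T.degree v - 1 = d' + 1 := by omega
    by_cases hAdj : T.Adj u v
    · -- adjacent case : vminus = u
      obtain ⟨hvmu, _⟩ := hadjcase hAdj
      have ha2 : T.degree vminus = a' + 1 := by rw [hvmu]; exact ha
      have hduv : T'.degree vminus = T.degree u + (T.degree v - 1) := by
        rw [hvmu]; exact hdu
      -- gain edges at u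
      set Nu : Finset V := (T.neighborFinset u).erase v with hNu
      set E₁ : Finset (Sym2 V) := Nu.image (fun w => s(u, w)) with hE₁
      have hNumem : ∀ w, w ∈ Nu ↔ T.Adj u w ∧ w ≠ v := by
        intro w
        rw [hNu, Finset.mem_erase, SimpleGraph.mem_neighborFinset, and_comm]
      have hE₁sub : E₁ ⊆ (T.edgeFinset \ D).erase s(v, vminus) := by
        intro e he
        rw [hE₁, Finset.mem_image] at he
        obtain ⟨w, hw, rfl⟩ := he
        rw [hNumem] at hw
        rw [Finset.mem_erase, Finset.mem_sdiff, SimpleGraph.mem_edgeFinset,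
          SimpleGraph.mem_edgeSet, hDmem]
        refine ⟨?_, hw.1, ?_⟩
        · intro hcon
          rw [Sym2.eq_iff] at hcon
          rcases hcon with ⟨h1, _⟩ | ⟨h1, h2⟩
          · exact huv h1
          · exact hw.2 h2
        · rintro (⟨h1, _⟩ | ⟨h1, h2⟩)
          · exact huv h1
          · exact hw.2 h1
      rw [← Finset.add_sum_erase _ f he₀, ← Finset.add_sum_erase _ f' he₀,
        ← Finset.sum_sdiff hE₁sub, ← Finset.sum_sdiff hE₁sub]
      have hinjNu : ∀ x ∈ Nu, ∀ y ∈ Nu,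
          (fun w => s(u, w)) x = (fun w => s(u, w)) y → x = y :=
        fun x _ y _ h => Sym2.congr_right.1 h
      have hE₁f : ∑ e ∈ E₁, f e = T.degree u * ∑ w ∈ Nu, T.degree w := by
        rw [hE₁, Finset.sum_image hinjNu, Finset.mul_sum]
        exact Finset.sum_congr rfl fun w _ => hfmk u w
      have hE₁f' : ∑ e ∈ E₁, f' e =
          (T.degree u + (T.degree v - 1)) * ∑ w ∈ Nu, T.degree w := by
        rw [hE₁, Finset.sum_image hinjNu, Finset.mul_sum]
        refine Finset.sum_congr rfl fun w hw => ?_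
        rw [hNumem] at hw
        rw [hf'mk u w, hdu, hdo w hw.1.ne' hw.2]
      have hRle : ∑ e ∈ (T.edgeFinset \ D).erase s(v, vminus) \ E₁, f e ≤
          ∑ e ∈ (T.edgeFinset \ D).erase s(v, vminus) \ E₁, f' e :=
        Finset.sum_le_sum fun e he => hpoint e (Finset.mem_sdiff.1 he).1
      have hcard : Nu.card = T.degree u - 1 := by
        rw [hNu, Finset.card_erase_of_mem ((SimpleGraph.mem_neighborFinset ..).2 hAdj),
          SimpleGraph.card_neighborFinset_eq_degree]
      have hW : Nu.card ≤ ∑ w ∈ Nu, T.degree w := by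
        have h1 : ∀ w ∈ Nu, 1 ≤ T.degree w := by
          intro w hw
          exact (SimpleGraph.degree_pos_iff_exists_adj T w).2 ⟨u, ((hNumem w).1 hw).1.symm⟩
        calc Nu.card = ∑ _w ∈ Nu, 1 := by simp
        _ ≤ ∑ w ∈ Nu, T.degree w := Finset.sum_le_sum h1
      have hW' : a' ≤ ∑ w ∈ Nu, T.degree w := by rw [ha] at hcard; omega
      have hmain : f s(v, vminus) + ∑ e ∈ E₁, f e + ∑ e ∈ D, f e ≤
          f' s(v, vminus) + ∑ e ∈ E₁, f' e + ∑ e ∈ A, f' e := by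
        rw [hfmk v vminus, hf'mk v vminus, hdv, hduv, hDsum, hAsum, hE₁f, hE₁f',
          ha2, hd1, ha, hd]
        nlinarith [Nat.mul_le_mul (le_refl (d' + 1)) hW',
          Nat.zero_le (∑ b ∈ Bfin, T.degree b)]
      have hDsum2 : D.sum f = T.degree v * ∑ b ∈ Bfin, T.degree b := hDsum
      have hAsum2 : A.sum f' =
          (T.degree u + (T.degree v - 1)) * ∑ b ∈ Bfin, T.degree b := hAsum
      omega
    · -- non-adjacent case
      have hvmu : vminus ≠ u := by
        rintro rfl
        exact hAdj hvm.symm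
      have hupu : uplus ≠ u := hup.ne'
      have hupv : uplus ≠ v := by
        rintro rfl
        exact hAdj hup
      have hm_le_p : T.degree vminus ≤ T.degree uplus := hcond hAdj
      set E₁ : Finset (Sym2 V) := {s(u, uplus)} with hE₁
      have hE₁sub : E₁ ⊆ (T.edgeFinset \ D).erase s(v, vminus) := by
        rw [hE₁, Finset.singleton_subset_iff, Finset.mem_erase, Finset.mem_sdiff,
          SimpleGraph.mem_edgeFinset, SimpleGraph.mem_edgeSet, hDmem]
        refine ⟨?_, hup, ?_⟩
        · intro hcon
          rw [Sym2.eq_iff] at hcon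
          rcases hcon with ⟨h1, _⟩ | ⟨h1, _⟩
          · exact huv h1
          · exact hvmu h1.symm
        · rintro (⟨h1, _⟩ | ⟨h1, _⟩)
          · exact huv h1
          · exact hupv h1
      rw [← Finset.add_sum_erase _ f he₀, ← Finset.add_sum_erase _ f' he₀,
        ← Finset.sum_sdiff hE₁sub, ← Finset.sum_sdiff hE₁sub]
      have hRle : ∑ e ∈ (T.edgeFinset \ D).erase s(v, vminus) \ E₁, f e ≤
          ∑ e ∈ (T.edgeFinset \ D).erase s(v, vminus) \ E₁, f' e :=
        Finset.sum_le_sum fun e he => hpoint e (Finset.mem_sdiff.1 he).1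
      have hmain : f s(v, vminus) + ∑ e ∈ E₁, f e + ∑ e ∈ D, f e ≤
          f' s(v, vminus) + ∑ e ∈ E₁, f' e + ∑ e ∈ A, f' e := by
        rw [hE₁, Finset.sum_singleton, Finset.sum_singleton, hfmk v vminus, hfmk u uplus,
          hf'mk v vminus, hf'mk u uplus, hdv, hdu, hDsum, hAsum,
          hdo vminus hvmu hvm.ne', hdo uplus hupu hupv, hd1, ha, hd]
        nlinarith [Nat.mul_le_mul (le_refl (d' + 1)) hm_le_p,
          Nat.zero_le (∑ b ∈ Bfin, T.degree b)]
      have hDsum2 : D.sum f = T.degree v * ∑ b ∈ Bfin, T.degree b := hDsum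
      have hAsum2 : A.sum f' =
          (T.degree u + (T.degree v - 1)) * ∑ b ∈ Bfin, T.degree b := hAsum
      omega
end

section
/- Let G be a finite connected split graph with split partition (K, I), where K is a maximal clique with |K| ≥ 3 and I is a nonempty independent set, and let T be a spanning tree of G with s(T) = τ₂(G) (an s-optimal tree). Then every vertex of I is a leaf of T. -/
open SimpleGraph Finset

variable {V : Type*}

/-!
Suppose a vertex `x ∈ I` had degree at least two in `T`. Its `T`-neighbours lie in `K`, and they
are not all leaves, since then `T` would be a star centred at `x` and `K ∪ {x}` a clique. Take a
neighbour `a` of degree `δ ≥ 2` and move every other edge `x b` of `T` to `a b`, an edge of `G`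
since `a, b ∈ K`. The result is again a spanning tree, `x` is now a leaf, and only the edges at
`x` and `a` change their weights: with `d = deg x`, `A` the degree sum over the other neighbours
of `x` and `B` the one over the other neighbours of `a`, the `s`-metric grows by
`(d - 1)(B + 1 - δ) + (δ - 1) A > 0`, contradicting optimality.
-/

namespace SimpleGraph

lemma IsAcyclic.not_adj_of_adj_of_adj {T : SimpleGraph V} (hT : T.IsAcyclic) {x a b : V}
    (hxa : T.Adj x a) (hxb : T.Adj x b) : ¬T.Adj a b := by
  classical
  exact fun hab => hT.cliqueFree le_rfl {x, a, b} (is3Clique_triple_iff.mpr ⟨hxa, hxb, hab⟩)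

lemma IsAcyclic.disjoint_neighborFinset_erase [Fintype V] [DecidableEq V] {T : SimpleGraph V}
    [DecidableRel T.Adj] (hT : T.IsAcyclic) {x a : V} (hxa : T.Adj x a) :
    Disjoint (T.neighborFinset a) ((T.neighborFinset x).erase a) := by
  rw [Finset.disjoint_right]
  intro b hb hab
  simp only [Finset.mem_erase, mem_neighborFinset] at hb hab
  exact hT.not_adj_of_adj_of_adj hxa hb.2 hab

lemma Connected.of_forall_adj_reachable {G H : SimpleGraph V} (hG : G.Connected)
    (h : ∀ u v, G.Adj u v → H.Reachable u v) : H.Connected := by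
  have := hG.nonempty
  refine ⟨fun u v => (reachable_iff_reflTransGen ..).mpr ?_⟩
  exact ((reachable_iff_reflTransGen ..).mp (hG u v)).lift' id
    fun p q hpq => (reachable_iff_reflTransGen ..).mp (h p q hpq)

lemma Connected.eq_or_adj_of_forall_adj_degree_le_one [Fintype V] {H : SimpleGraph V}
    [DecidableRel H.Adj] (hH : H.Connected) {x : V} (h : ∀ v, H.Adj x v → H.degree v ≤ 1)
    (v : V) : v = x ∨ H.Adj x v := by
  induction (reachable_iff_reflTransGen ..).mp (hH x v) with
  | refl => exact .inl rfl
  | @tail b c _ hbc ih =>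
    rcases ih with rfl | hxb
    · exact .inr hbc
    · exact .inl (Finset.card_le_one.mp (h b hxb) c ((mem_neighborFinset ..).mpr hbc) x
        ((mem_neighborFinset ..).mpr hxb.symm))

lemma degree_le_sum_degree_erase_add_one [Fintype V] [DecidableEq V] (H : SimpleGraph V)
    [DecidableRel H.Adj] {x a : V} (hxa : H.Adj x a) :
    H.degree x ≤ ∑ v ∈ (H.neighborFinset x).erase a, H.degree v + 1 := by
  rw [← card_neighborFinset_eq_degree,
    ← Finset.card_erase_add_one ((mem_neighborFinset ..).mpr hxa), Finset.card_eq_sum_ones]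
  refine Nat.add_le_add_right (Finset.sum_le_sum fun v hv => ?_) 1
  exact (H.degree_pos_iff_exists_adj v).mpr ⟨x, ((mem_neighborFinset ..).mp
    (Finset.mem_of_mem_erase hv)).symm⟩

section sMetric

variable [Fintype V] (H : SimpleGraph V) [DecidableRel H.Adj]

def degreeProduct : Sym2 V → ℕ :=
  Sym2.lift ⟨fun u v => H.degree u * H.degree v, fun _ _ => Nat.mul_comm _ _⟩

lemma degreeProduct_mk (u v : V) : H.degreeProduct s(u, v) = H.degree u * H.degree v := rfl

lemma sMetric_eq_sum_degreeProduct : sMetric H = ∑ e ∈ H.edgeFinset, H.degreeProduct e := by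
  unfold sMetric degreeProduct
  congr!

variable [DecidableEq V]

lemma sum_edgeFinset_filter_mem_notMem {M : Type*} [AddCommMonoid M] (f : Sym2 V → M)
    {x y : V} (hxy : x ≠ y) :
    ∑ e ∈ H.edgeFinset with x ∈ e ∧ y ∉ e, f e
      = ∑ v ∈ (H.neighborFinset x).erase y, f s(x, v) := by
  rw [← Finset.sum_image fun v _ w _ h => Sym2.congr_right.mp h]
  congr 1
  ext e
  induction e using Sym2.ind with
  | h u w =>
    simp only [Finset.mem_filter, mem_edgeFinset, mem_edgeSet, Finset.mem_image, Finset.mem_erase,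
      mem_neighborFinset, Sym2.mem_iff, Sym2.eq_iff]
    grind [adj_comm]

lemma sMetric_eq_of_adj {x a : V} (hxa : H.Adj x a) :
    sMetric H = ∑ e ∈ H.edgeFinset with x ∉ e ∧ a ∉ e, H.degreeProduct e
      + H.degree x * H.degree a
      + H.degree x * ∑ v ∈ (H.neighborFinset x).erase a, H.degree v
      + H.degree a * ∑ v ∈ (H.neighborFinset a).erase x, H.degree v := by
  have hboth : ∑ e ∈ H.edgeFinset with x ∈ e ∧ a ∈ e, H.degreeProduct e
      = H.degree x * H.degree a := by
    rw [Finset.filter_congr fun e _ => Sym2.mem_and_mem_iff hxa.ne, Finset.filter_eq',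
      if_pos (H.mem_edgeFinset.mpr hxa), Finset.sum_singleton]
    rfl
  have hx := H.sum_edgeFinset_filter_mem_notMem H.degreeProduct hxa.ne
  have ha := H.sum_edgeFinset_filter_mem_notMem H.degreeProduct hxa.ne.symm
  rw [Finset.filter_congr fun e _ => and_comm] at ha
  simp only [degreeProduct_mk, ← Finset.mul_sum] at hx ha
  rw [sMetric_eq_sum_degreeProduct, ← Finset.sum_filter_add_sum_filter_not _ (x ∈ ·),
    ← Finset.sum_filter_add_sum_filter_not (filter (x ∈ ·) _) (a ∈ ·),
    ← Finset.sum_filter_add_sum_filter_not (filter (x ∉ ·) _) (a ∈ ·)]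
  simp only [Finset.filter_filter, hboth, hx, ha]
  ring

end sMetric

/-- Turns `x` into a leaf hanging from `a` by moving every other edge `x b` of `T` to `a b`. -/
def rewire (T : SimpleGraph V) (x a : V) : SimpleGraph V :=
  fromRel fun u v =>
    (T.Adj u v ∧ u ≠ x ∧ v ≠ x) ∨ (u = x ∧ v = a) ∨ (u = a ∧ T.Adj x v)

section rewire

variable {T : SimpleGraph V} {x a : V}

lemma rewire_adj_left (hxa : x ≠ a) {v : V} : (T.rewire x a).Adj x v ↔ v = a := by
  simp only [rewire, fromRel_adj]
  grind [T.loopless.irrefl x]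

lemma rewire_adj_right (hxa : T.Adj x a) {v : V} :
    (T.rewire x a).Adj a v ↔ T.Adj a v ∨ (T.Adj x v ∧ v ≠ a) := by
  simp only [rewire, fromRel_adj]
  grind [T.loopless.irrefl x, T.loopless.irrefl a, adj_comm]

lemma rewire_adj_of_ne {w v : V} (hwx : w ≠ x) (hwa : w ≠ a) :
    (T.rewire x a).Adj w v ↔ (T.Adj w v ∧ v ≠ x) ∨ (v = a ∧ T.Adj x w) := by
  simp only [rewire, fromRel_adj]
  grind [T.loopless.irrefl w, adj_comm]

lemma rewire_le {G : SimpleGraph V} (hle : T ≤ G) (hxa : T.Adj x a)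
    (h : ∀ b, T.Adj x b → b ≠ a → G.Adj a b) : T.rewire x a ≤ G := by
  rintro u v ⟨huv, (⟨huv', -, -⟩ | ⟨rfl, rfl⟩ | ⟨rfl, hxv⟩) |
    (⟨hvu, -, -⟩ | ⟨rfl, rfl⟩ | ⟨rfl, hxu⟩)⟩
  · exact hle huv'
  · exact hle hxa
  · exact h v hxv huv.symm
  · exact hle hvu.symm
  · exact (hle hxa).symm
  · exact (h u hxu huv).symm

lemma Connected.rewire (hT : T.Connected) (hxa : T.Adj x a) : (T.rewire x a).Connected := by
  have hxa' : (T.rewire x a).Adj x a := (rewire_adj_left hxa.ne).mpr rfl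
  have hx (v : V) (hxv : T.Adj x v) : (T.rewire x a).Reachable x v := by
    obtain rfl | hva := eq_or_ne v a
    · exact hxa'.reachable
    · exact hxa'.reachable.trans ((rewire_adj_right hxa).mpr (.inr ⟨hxv, hva⟩)).reachable
  refine hT.of_forall_adj_reachable fun u v huv => ?_
  obtain rfl | hux := eq_or_ne u x
  · exact hx v huv
  obtain rfl | hvx := eq_or_ne v x
  · exact (hx u huv.symm).symm
  exact Adj.reachable ⟨huv.ne, .inl (.inl ⟨huv, hux, hvx⟩)⟩

variable [Fintype V] [DecidableRel (T.rewire x a).Adj]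

lemma neighborFinset_rewire_left (hxa : x ≠ a) : (T.rewire x a).neighborFinset x = {a} := by
  ext v
  simp [rewire_adj_left hxa]

lemma degree_rewire_left (hxa : x ≠ a) : (T.rewire x a).degree x = 1 := by
  rw [← card_neighborFinset_eq_degree, neighborFinset_rewire_left hxa, Finset.card_singleton]

variable [DecidableEq V] [DecidableRel T.Adj]

lemma neighborFinset_rewire_right (hxa : T.Adj x a) :
    (T.rewire x a).neighborFinset a = T.neighborFinset a ∪ (T.neighborFinset x).erase a := by
  ext v
  simp [rewire_adj_right hxa, and_comm]

lemma degree_rewire_right (hT : T.IsAcyclic) (hxa : T.Adj x a) :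
    (T.rewire x a).degree a + 1 = T.degree a + T.degree x := by
  rw [← card_neighborFinset_eq_degree, neighborFinset_rewire_right hxa,
    Finset.card_union_of_disjoint (hT.disjoint_neighborFinset_erase hxa), add_assoc,
    Finset.card_erase_add_one ((mem_neighborFinset ..).mpr hxa)]
  rfl

lemma degree_rewire_of_ne (hT : T.IsAcyclic) (hxa : T.Adj x a) {w : V} (hwx : w ≠ x)
    (hwa : w ≠ a) : (T.rewire x a).degree w = T.degree w := by
  simp only [← card_neighborFinset_eq_degree]
  by_cases hxw : T.Adj x w
  · have hN : (T.rewire x a).neighborFinset w = insert a ((T.neighborFinset w).erase x) := by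
      ext v
      simp only [mem_neighborFinset, rewire_adj_of_ne hwx hwa, Finset.mem_insert,
        Finset.mem_erase]
      grind
    have ha : a ∉ (T.neighborFinset w).erase x := by
      simp [hT.not_adj_of_adj_of_adj hxa hxw, adj_comm]
    rw [hN, Finset.card_insert_of_notMem ha,
      Finset.card_erase_add_one ((mem_neighborFinset ..).mpr hxw.symm)]
  · congr 1
    ext v
    simp only [mem_neighborFinset, rewire_adj_of_ne hwx hwa, hxw, and_false, or_false,
      and_iff_left_iff_imp]
    rintro hwv rfl
    exact hxw hwv.symm

lemma card_edgeFinset_rewire (hT : T.IsAcyclic) (hxa : T.Adj x a) :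
    #(T.rewire x a).edgeFinset = #T.edgeFinset := by
  have hsum (H : SimpleGraph V) [DecidableRel H.Adj] :
      ∑ v, H.degree v
        = H.degree x + (H.degree a + ∑ v ∈ (univ.erase x).erase a, H.degree v) := by
    rw [Finset.add_sum_erase (univ.erase x) (fun v => H.degree v)
      (Finset.mem_erase_of_ne_of_mem hxa.ne' (mem_univ a)),
      Finset.add_sum_erase univ (fun v => H.degree v) (mem_univ x)]
  have hrest : ∑ v ∈ (univ.erase x).erase a, (T.rewire x a).degree v
      = ∑ v ∈ (univ.erase x).erase a, T.degree v :=
    Finset.sum_congr rfl fun v hv => by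
      simp only [Finset.mem_erase] at hv
      exact degree_rewire_of_ne hT hxa hv.2.1 hv.1
  have hsum' := (T.rewire x a).sum_degrees_eq_twice_card_edges
  have hsumT := T.sum_degrees_eq_twice_card_edges
  rw [hsum, hrest, degree_rewire_left hxa.ne] at hsum'
  rw [hsum] at hsumT
  have := degree_rewire_right hT hxa
  omega

lemma IsTree.rewire (hT : T.IsTree) (hxa : T.Adj x a) : (T.rewire x a).IsTree := by
  refine isTree_iff_connected_and_card.mpr ⟨hT.connected.rewire hxa, ?_⟩
  have := hT.card_edgeFinset
  rw [← card_edgeFinset_rewire hT.isAcyclic hxa] at this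
  simpa [Nat.card_eq_fintype_card, edgeFinset_card] using this

end rewire

section sMetric_rewire

variable [Fintype V] [DecidableEq V] {T : SimpleGraph V} [DecidableRel T.Adj] {x a : V}
  [DecidableRel (T.rewire x a).Adj]

lemma sum_degreeProduct_rewire_of_notMem (hT : T.IsAcyclic) (hxa : T.Adj x a) :
    ∑ e ∈ (T.rewire x a).edgeFinset with x ∉ e ∧ a ∉ e, (T.rewire x a).degreeProduct e
      = ∑ e ∈ T.edgeFinset with x ∉ e ∧ a ∉ e, T.degreeProduct e := by
  refine Finset.sum_congr ?_ fun e he => ?_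
  · ext e
    induction e using Sym2.ind with
    | h u w =>
      simp only [Finset.mem_filter, mem_edgeFinset, mem_edgeSet, Sym2.mem_iff, not_or]
      grind [rewire_adj_of_ne]
  · induction e using Sym2.ind with
    | h u w =>
      simp only [Finset.mem_filter, Sym2.mem_iff, not_or] at he
      rw [degreeProduct_mk, degreeProduct_mk,
        degree_rewire_of_ne hT hxa (Ne.symm he.2.1.1) (Ne.symm he.2.2.1),
        degree_rewire_of_ne hT hxa (Ne.symm he.2.1.2) (Ne.symm he.2.2.2)]

lemma sum_degree_erase_rewire_right (hT : T.IsAcyclic) (hxa : T.Adj x a) :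
    ∑ v ∈ ((T.rewire x a).neighborFinset a).erase x, (T.rewire x a).degree v
      = ∑ v ∈ (T.neighborFinset a).erase x, T.degree v
        + ∑ v ∈ (T.neighborFinset x).erase a, T.degree v := by
  have hx : x ∉ (T.neighborFinset x).erase a := by simp
  rw [neighborFinset_rewire_right hxa, Finset.erase_union_distrib, Finset.erase_eq_of_notMem hx,
    Finset.sum_union ((hT.disjoint_neighborFinset_erase hxa).mono_left (Finset.erase_subset _ _))]
  congr 1 <;> refine Finset.sum_congr rfl fun v hv => degree_rewire_of_ne hT hxa ?_ ?_ <;>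
    simp only [Finset.mem_erase, mem_neighborFinset] at hv
  · exact hv.1
  · exact hv.2.ne'
  · exact hv.2.ne'
  · exact hv.1

lemma sMetric_lt_rewire (hT : T.IsAcyclic) (hxa : T.Adj x a) (hx : 2 ≤ T.degree x)
    (ha : 2 ≤ T.degree a) : sMetric T < sMetric (T.rewire x a) := by
  have hA := T.degree_le_sum_degree_erase_add_one hxa
  have hB := T.degree_le_sum_degree_erase_add_one hxa.symm
  have ha' := degree_rewire_right hT hxa
  rw [T.sMetric_eq_of_adj hxa, (T.rewire x a).sMetric_eq_of_adj ((rewire_adj_left hxa.ne).mpr rfl),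
    sum_degreeProduct_rewire_of_notMem hT hxa, sum_degree_erase_rewire_right hT hxa,
    neighborFinset_rewire_left hxa.ne, degree_rewire_left hxa.ne]
  simp only [Finset.erase_singleton, Finset.sum_empty, mul_zero, one_mul, add_zero]
  generalize ∑ v ∈ (T.neighborFinset x).erase a, T.degree v = A at *
  generalize ∑ v ∈ (T.neighborFinset a).erase x, T.degree v = B at *
  nlinarith

end sMetric_rewire

end SimpleGraph

lemma sMetric_le_tau2 [Fintype V] {G T : SimpleGraph V} (hle : T ≤ G) (hT : T.IsTree) :
    sMetric T ≤ tau2 G := by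
  have hfin : {k | ∃ T : SimpleGraph V, T ≤ G ∧ T.IsTree ∧ sMetric T = k}.Finite :=
    (Set.finite_range sMetric).subset fun _ ⟨T', _, _, h⟩ => ⟨T', h⟩
  exact le_csSup hfin.bddAbove ⟨T, hle, hT, rfl⟩

theorem indep_vertices_are_leaves_of_sOptimal_general [Fintype V]
    (G : SimpleGraph V)
    (K I : Set V) (hpart : ∀ x : V, x ∈ K ∨ x ∈ I) (hdisj : Disjoint K I)
    (hK : G.IsClique K)
    (hKmax : ∀ K' : Set V, G.IsClique K' → K ⊆ K' → K' ⊆ K)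
    (hI : ∀ a ∈ I, ∀ b ∈ I, ¬G.Adj a b)
    (T : SimpleGraph V) [DecidableRel T.Adj] (hle : T ≤ G) (hT : T.IsTree)
    (hopt : sMetric T = tau2 G) :
    ∀ x ∈ I, T.degree x = 1 := by
  classical
  intro x hxI
  by_contra hx1
  have hxK : x ∉ K := hdisj.notMem_of_mem_right hxI
  have hNK (b : V) (hxb : T.Adj x b) : b ∈ K :=
    (hpart b).resolve_right fun hbI => hI x hxI b hbI (hle hxb)
  -- otherwise `T` is a star centred at `x`, and `K ∪ {x}` would be a larger clique
  obtain ⟨a, hxa, ha⟩ : ∃ a, T.Adj x a ∧ 2 ≤ T.degree a := by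
    by_contra! hleaf
    have hstar := hT.connected.eq_or_adj_of_forall_adj_degree_le_one fun v hv =>
      Nat.le_of_lt_succ (hleaf v hv)
    refine hxK (hKmax _ (isClique_insert.mpr ⟨hK, fun b _ hxb => ?_⟩) (Set.subset_insert x K)
      (Set.mem_insert x K))
    exact hle ((hstar b).resolve_left hxb.symm)
  have hx : 2 ≤ T.degree x := by
    have := (T.degree_pos_iff_exists_adj x).mpr ⟨a, hxa⟩
    omega
  have hle' : T.rewire x a ≤ G :=
    rewire_le hle hxa fun b hxb hba => hK (hNK a hxa) (hNK b hxb) hba.symm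
  have := sMetric_le_tau2 hle' (hT.rewire hxa)
  have := sMetric_lt_rewire hT.isAcyclic hxa hx ha
  omega

/-- Claim 1: in an s-optimal spanning tree of a connected split graph with split partition
`(K, I)`, where `K` is a maximal clique with `|K| ≥ 3` and `I` is a nonempty independent
set, every vertex of `I` is a leaf. -/
theorem indep_vertices_are_leaves_of_sOptimal [Fintype V]
    (G : SimpleGraph V) (hG : G.Connected)
    (K I : Set V) (hpart : ∀ x : V, x ∈ K ∨ x ∈ I) (hdisj : Disjoint K I)
    (hK : G.IsClique K)
    (hKmax : ∀ K' : Set V, G.IsClique K' → K ⊆ K' → K' ⊆ K)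
    (hI : ∀ a ∈ I, ∀ b ∈ I, ¬G.Adj a b)
    (hKcard : 3 ≤ K.ncard) (hIne : I.Nonempty)
    (T : SimpleGraph V) [DecidableRel T.Adj] (hle : T ≤ G) (hT : T.IsTree)
    (hopt : sMetric T = tau2 G) :
    ∀ x ∈ I, T.degree x = 1 :=
  indep_vertices_are_leaves_of_sOptimal_general G K I hpart hdisj hK hKmax hI T hle hT hopt
end
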